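/- arXiv:2302.07018 — 2 statements merged into one kernel-verified Lean document; each statement's English description precedes it below -/
import Mathlib

section
/- Let h(z) = p(z) - i l q(z) = ∏_{j=1}^n (z - z_j), where p and q are monic real polynomials with deg p = n, deg q ≤ n - 1, l ∈ ℝ, and suppose all zeros z_j of h lie in the open upper half-plane ℂ₊. Then p has exactly s negative zeros and exactly n - s positive zeros if and only if π/2 + π(s-1) < Σ_{j=1}^n Arg z_j < π/2 + π s. -/
/-! For real `x` write `∏ⱼ (zⱼ - x) = R(x) e^{iΘ(x)}` with `R(x) > 0` and
`Θ(x) = argSum z x = ∑ⱼ arg (zⱼ - x)`. Since every `zⱼ` lies in the upper half-plane, each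
`arg (zⱼ - x)` increases continuously from `0` to `π` as `x` runs over `ℝ`, so `Θ` is a strictly
increasing map onto `(0, nπ)`. On `ℝ`, `p` is the real part of `h = (-1)ⁿ R e^{iΘ}`, so it vanishes
at the `n` points where `Θ = π/2 + mπ`, `m = 0, …, n - 1`, and, having degree `n`, nowhere else.
Such a zero is negative exactly when `π/2 + mπ < Θ(0) = ∑ⱼ Arg zⱼ`, which turns the two zero
counts into the position of `∑ⱼ Arg zⱼ` among the numbers `π/2 + mπ`. -/

/-- The principal value of the argument in `[-π, π)`. -/
noncomputable def argPV (z : ℂ) : ℝ :=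
  if Complex.arg z = Real.pi then -Real.pi else Complex.arg z

open Real Filter Topology Finset

theorem argPV_eq_arg {z : ℂ} (hz : 0 ≤ z.re ∨ z.im ≠ 0) : argPV z = Complex.arg z :=
  if_neg (Complex.arg_lt_pi_iff.mpr hz).ne

namespace Complex

variable {w : ℂ}

theorem arg_eq_pi_div_two_sub_arctan (hw : 0 < w.im) :
    arg w = π / 2 - Real.arctan (w.re / w.im) := by
  have h0 : 0 < arg w := (arg_nonneg_iff.mpr hw.le).lt_of_ne' fun h =>
    hw.ne' (arg_eq_zero_iff.mp h).2
  have hπ : arg w < π := arg_lt_pi_iff.mpr (Or.inr hw.ne')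
  have : Real.arctan (w.re / w.im) = π / 2 - arg w := by
    rw [← inv_div, ← tan_arg, ← Real.tan_pi_div_two_sub, Real.arctan_tan] <;> linarith
  linarith

theorem arg_sub_ofReal (hw : 0 < w.im) (x : ℝ) :
    arg (w - x) = π / 2 - Real.arctan ((w.re - x) / w.im) := by
  rw [arg_eq_pi_div_two_sub_arctan (by simpa using hw)]
  simp

theorem strictMono_arg_sub_ofReal (hw : 0 < w.im) :
    StrictMono fun x : ℝ => arg (w - x) := by
  intro x x' hx
  simp only [arg_sub_ofReal hw]
  gcongr

theorem continuous_arg_sub_ofReal (hw : 0 < w.im) :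
    Continuous fun x : ℝ => arg (w - x) := by
  simp only [arg_sub_ofReal hw]
  fun_prop

theorem tendsto_arg_sub_ofReal_atBot (hw : 0 < w.im) :
    Tendsto (fun x : ℝ => arg (w - x)) atBot (𝓝 0) := by
  simp only [arg_sub_ofReal hw]
  have : Tendsto (fun x : ℝ => (w.re - x) / w.im) atBot atTop :=
    (tendsto_atTop_add_const_left _ _ tendsto_neg_atBot_atTop).atTop_div_const hw
  simpa using ((tendsto_arctan_atTop.mono_right nhdsWithin_le_nhds).comp this).const_sub (π / 2)

theorem tendsto_arg_sub_ofReal_atTop (hw : 0 < w.im) :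
    Tendsto (fun x : ℝ => arg (w - x)) atTop (𝓝 π) := by
  simp only [arg_sub_ofReal hw]
  have : Tendsto (fun x : ℝ => (w.re - x) / w.im) atTop atBot :=
    (tendsto_atBot_add_const_left _ _ tendsto_neg_atTop_atBot).atBot_div_const hw
  simpa using ((tendsto_arctan_atBot.mono_right nhdsWithin_le_nhds).comp this).const_sub (π / 2)

end Complex

noncomputable def argSum {ι : Type*} [Fintype ι] (z : ι → ℂ) (x : ℝ) : ℝ :=
  ∑ j, Complex.arg (z j - x)

section
variable {ι : Type*} [Fintype ι] {z : ι → ℂ}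

theorem strictMono_argSum [Nonempty ι] (hz : ∀ j, 0 < (z j).im) : StrictMono (argSum z) :=
  fun _ _ hx => sum_lt_sum_of_nonempty univ_nonempty fun j _ =>
    Complex.strictMono_arg_sub_ofReal (hz j) hx

theorem Ioo_subset_range_argSum (hz : ∀ j, 0 < (z j).im) :
    Set.Ioo 0 (Fintype.card ι * π) ⊆ Set.range (argSum z) := by
  intro c ⟨hc0, hcπ⟩
  have hbot : Tendsto (argSum z) atBot (𝓝 0) := by
    have h : Tendsto (argSum z) atBot (𝓝 (∑ j : ι, 0)) :=
      tendsto_finsetSum univ fun j _ => Complex.tendsto_arg_sub_ofReal_atBot (hz j)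
    rwa [sum_const_zero] at h
  have htop : Tendsto (argSum z) atTop (𝓝 (Fintype.card ι * π)) := by
    have h : Tendsto (argSum z) atTop (𝓝 (∑ j : ι, π)) :=
      tendsto_finsetSum univ fun j _ => Complex.tendsto_arg_sub_ofReal_atTop (hz j)
    rwa [sum_const, card_univ, nsmul_eq_mul] at h
  exact mem_range_of_exists_le_of_exists_ge
    (continuous_finsetSum univ fun j _ => Complex.continuous_arg_sub_ofReal (hz j))
    ((hbot.eventually (gt_mem_nhds hc0)).exists.imp fun _ => le_of_lt)
    ((htop.eventually (lt_mem_nhds hcπ)).exists.imp fun _ => le_of_lt)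

theorem argSum_nonneg (hz : ∀ j, 0 ≤ (z j).im) (x : ℝ) : 0 ≤ argSum z x :=
  sum_nonneg fun j _ => Complex.arg_nonneg_iff.mpr (by simpa using hz j)

theorem argSum_le (z : ι → ℂ) (x : ℝ) : argSum z x ≤ Fintype.card ι * π := by
  simpa [argSum] using sum_le_sum fun j (_ : j ∈ univ) => Complex.arg_le_pi (z j - x)

theorem re_prod_ofReal_sub (z : ι → ℂ) (x : ℝ) :
    (∏ j, ((x : ℂ) - z j)).re =
      (-1) ^ Fintype.card ι * (∏ j, ‖z j - x‖) * cos (argSum z x) := by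
  have hpolar :
      ∏ j, (z j - x) = (∏ j, ‖z j - x‖ : ℝ) * Complex.exp (argSum z x * Complex.I) := by
    simp_rw [argSum, Complex.ofReal_sum, sum_mul, Complex.exp_sum, Complex.ofReal_prod,
      ← prod_mul_distrib, Complex.norm_mul_exp_arg_mul_I]
  rw [prod_congr rfl fun j _ => (neg_sub (z j) x).symm, prod_neg, hpolar, card_univ,
    ← mul_assoc]
  norm_cast
  rw [Complex.re_ofReal_mul, Complex.exp_ofReal_mul_I_re]

end

theorem Polynomial.eval_eq_re_eval_of_map_sub_I_mul {p q : Polynomial ℝ} {h : Polynomial ℂ}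
    {l : ℝ}
    (hpq : p.map (algebraMap ℝ ℂ) - Polynomial.C (Complex.I * l) * q.map (algebraMap ℝ ℂ) = h)
    (x : ℝ) : p.eval x = (h.eval (x : ℂ)).re := by
  simp only [← hpq, Polynomial.eval_sub, Polynomial.eval_mul, Polynomial.eval_C,
    Polynomial.eval_map, ← Complex.coe_algebraMap, Polynomial.eval₂_at_apply]
  simp

theorem Polynomial.roots_eq_map_of_injective {R ι : Type*} [CommRing R] [IsDomain R] [Fintype ι]
    {p : Polynomial R} (hp : p ≠ 0) (hdeg : p.natDegree ≤ Fintype.card ι) {y : ι → R}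
    (hy : Function.Injective y) (hroot : ∀ i, p.IsRoot (y i)) :
    p.roots = univ.val.map y := by
  have hle : univ.val.map y ≤ p.roots := by
    refine (Multiset.le_iff_subset (univ.nodup.map hy)).mpr fun r hr => ?_
    obtain ⟨i, -, rfl⟩ := Multiset.mem_map.mp hr
    exact (Polynomial.mem_roots hp).mpr (hroot i)
  exact (Multiset.eq_of_le_of_card_le hle (by simpa using (p.card_roots').trans hdeg)).symm

theorem Multiset.card_filter_map_univ {α ι : Type*} [Fintype ι] (y : ι → α) (P : α → Prop)
    [DecidablePred P] : (Multiset.filter P (univ.val.map y)).card = #{i | P (y i)} := by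
  rw [Multiset.filter_map, Multiset.card_map]
  rfl

namespace Fin

theorem filter_cast_lt_eq {n k : ℕ} {t : ℝ} (h1 : (k : ℝ) - 1 < t) (h2 : t ≤ k) :
    (univ.filter fun m : Fin n => ((m : ℕ) : ℝ) < t) =
      univ.filter fun m : Fin n => (m : ℕ) < k := by
  ext m
  simp only [mem_filter, mem_univ, true_and]
  constructor
  · intro h
    exact_mod_cast h.trans_le h2
  · intro h
    have : ((m : ℕ) : ℝ) + 1 ≤ k := by exact_mod_cast h
    linarith

theorem filter_lt_cast_eq {n k : ℕ} {t : ℝ} (h1 : (k : ℝ) - 1 ≤ t) (h2 : t < k) :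
    (univ.filter fun m : Fin n => t < ((m : ℕ) : ℝ)) =
      univ.filter fun m : Fin n => ¬ (m : ℕ) < k := by
  ext m
  simp only [mem_filter, mem_univ, true_and, not_lt]
  constructor
  · intro h
    have : (k : ℝ) - 1 < m := h1.trans_lt h
    have : (k : ℝ) < m + 1 := by linarith
    exact_mod_cast Nat.lt_add_one_iff.mp (by exact_mod_cast this)
  · intro h
    exact h2.trans_le (by exact_mod_cast h)

theorem card_filter_not_val_lt {n k : ℕ} :
    #{m : Fin n | ¬ (m : ℕ) < k} = n - min n k := by
  rw [filter_not, card_sdiff_of_subset (filter_subset _ _), card_filter_val_lt, card_univ,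
    Fintype.card_fin]

theorem card_cast_lt_and_card_lt_cast_iff {n s : ℕ} {t : ℝ} (h0 : -1 < t) (hn : t < n) :
    (#{m : Fin n | ((m : ℕ) : ℝ) < t} = s ∧ #{m : Fin n | t < ((m : ℕ) : ℝ)} = n - s) ↔
      ((s : ℝ) - 1 < t ∧ t < s) := by
  constructor
  · rintro ⟨hlt, hgt⟩
    have hk1 : (⌈t⌉₊ : ℝ) - 1 < t := by linarith [Nat.ceil_lt_add_one_of_gt_neg_one h0]
    have hkn : ⌈t⌉₊ ≤ n := Nat.ceil_le.mpr hn.le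
    rw [filter_cast_lt_eq hk1 (Nat.le_ceil t), card_filter_val_lt, min_eq_right hkn] at hlt
    subst hlt
    refine ⟨hk1, (Nat.le_ceil t).lt_of_ne fun heq => ?_⟩
    have hkn' : ⌈t⌉₊ < n := by exact_mod_cast heq ▸ hn
    rw [filter_lt_cast_eq (k := ⌈t⌉₊ + 1) (by push_cast; linarith) (by push_cast; linarith),
      card_filter_not_val_lt] at hgt
    omega
  · rintro ⟨h1, h2⟩
    have hsn : s ≤ n :=
      Nat.lt_add_one_iff.mp (by exact_mod_cast (show (s : ℝ) < n + 1 by linarith))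
    rw [filter_cast_lt_eq h1 h2.le, filter_lt_cast_eq h1.le h2, card_filter_val_lt,
      card_filter_not_val_lt, min_eq_right hsn]
    exact ⟨rfl, rfl⟩

theorem card_filter_pi_div_two_add_pi_mul_iff {n s : ℕ} {S : ℝ} (h0 : 0 ≤ S) (hn : S ≤ n * π) :
    (#{m : Fin n | π / 2 + π * (m : ℕ) < S} = s ∧
        #{m : Fin n | S < π / 2 + π * (m : ℕ)} = n - s) ↔
      (π / 2 + π * ((s : ℝ) - 1) < S ∧ S < π / 2 + π * s) := by
  have key : ∀ a : ℝ, (π / 2 + π * a < S ↔ a < S / π - 1 / 2) ∧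
      (S < π / 2 + π * a ↔ S / π - 1 / 2 < a) := fun a => by
    rw [show S / π - 1 / 2 = (S - π / 2) / π by field_simp, lt_div_iff₀ pi_pos,
      div_lt_iff₀ pi_pos]
    constructor <;> constructor <;> intro <;> linarith
  simp only [key]
  apply card_cast_lt_and_card_lt_cast_iff
  · have := div_nonneg h0 pi_pos.le
    linarith
  · have := (div_le_iff₀ pi_pos).mpr hn
    linarith

end Fin

theorem roots_eq_map_of_argSum_eq {n : ℕ} {p q : Polynomial ℝ} {l : ℝ} {z : Fin n → ℂ}
    (hp : p ≠ 0) (hpd : p.natDegree ≤ n)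
    (hfact : p.map (algebraMap ℝ ℂ) - Polynomial.C (Complex.I * l) * q.map (algebraMap ℝ ℂ) =
      ∏ j, (Polynomial.X - Polynomial.C (z j)))
    {y : Fin n → ℝ} (hy : ∀ m : Fin n, argSum z (y m) = π / 2 + π * (m : ℕ)) :
    p.roots = univ.val.map y := by
  refine Polynomial.roots_eq_map_of_injective hp (by simpa using hpd) (fun m m' h => ?_)
    fun m => ?_
  · have := hy m'
    rw [← h, hy m] at this
    exact Fin.ext (by exact_mod_cast mul_left_cancel₀ pi_ne_zero (add_left_cancel this))
  · rw [Polynomial.IsRoot, Polynomial.eval_eq_re_eval_of_map_sub_I_mul hfact,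
      Polynomial.eval_prod]
    simp only [Polynomial.eval_sub, Polynomial.eval_X, Polynomial.eval_C]
    rw [re_prod_ofReal_sub, hy, add_comm, cos_add_pi_div_two, mul_comm π, sin_nat_mul_pi]
    simp

theorem neg_pos_zero_count_iff_arg_sum_general (n s : ℕ) (p q : Polynomial ℝ) (l : ℝ)
    (hp : p.Monic) (hpd : p.natDegree = n)
    (z : Fin n → ℂ)
    (hfact : p.map (algebraMap ℝ ℂ)
        - Polynomial.C (Complex.I * l) * q.map (algebraMap ℝ ℂ)
      = ∏ j, (Polynomial.X - Polynomial.C (z j)))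
    (hupper : ∀ j, 0 < (z j).im) :
    ((p.roots.filter (fun x => x < 0)).card = s ∧
     (p.roots.filter (fun x => 0 < x)).card = n - s)
      ↔ (Real.pi / 2 + Real.pi * ((s : ℝ) - 1) < ∑ j, argPV (z j) ∧
         ∑ j, argPV (z j) < Real.pi / 2 + Real.pi * s) := by
  have hS : ∑ j, argPV (z j) = argSum z 0 := by
    simp only [argSum, Complex.ofReal_zero, sub_zero]
    exact sum_congr rfl fun j _ => argPV_eq_arg (Or.inr (hupper j).ne')
  have hvalues : ∀ m : Fin n, π / 2 + π * (m : ℕ) ∈ Set.range (argSum z) := fun m => by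
    refine Ioo_subset_range_argSum hupper ⟨by positivity, ?_⟩
    have : ((m : ℕ) : ℝ) + 1 ≤ n := by exact_mod_cast m.isLt
    simp only [Fintype.card_fin]
    nlinarith [pi_pos]
  choose y hy using hvalues
  have hroots : p.roots = univ.val.map y :=
    roots_eq_map_of_argSum_eq hp.ne_zero hpd.le hfact hy
  have hsign : ∀ m, (y m < 0 ↔ π / 2 + π * (m : ℕ) < argSum z 0) ∧
      (0 < y m ↔ argSum z 0 < π / 2 + π * (m : ℕ)) := fun m => by
    have : Nonempty (Fin n) := ⟨m⟩
    simp only [← hy, (strictMono_argSum hupper).lt_iff_lt, and_self]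
  rw [hroots, Multiset.card_filter_map_univ, Multiset.card_filter_map_univ, hS]
  simp only [hsign]
  exact Fin.card_filter_pi_div_two_add_pi_mul_iff (argSum_nonneg (fun j => (hupper j).le) 0)
    (by simpa using argSum_le z 0)

/-- Let `h = p - i l q = ∏ⱼ (z - zⱼ)` with `p`, `q` monic real, `deg p = n`,
`deg q ≤ n - 1`, `l ∈ ℝ`, and all zeros `zⱼ` of `h` in the open upper half-plane.
Then `p` has exactly `s` negative zeros and exactly `n - s` positive zeros if and only
if `π/2 + π (s - 1) < ∑ⱼ Arg zⱼ < π/2 + π s`. -/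
theorem neg_pos_zero_count_iff_arg_sum (n s : ℕ) (p q : Polynomial ℝ) (l : ℝ)
    (hp : p.Monic) (hq : q.Monic) (hpd : p.natDegree = n) (hqd : q.natDegree ≤ n - 1)
    (z : Fin n → ℂ)
    (hfact : p.map (algebraMap ℝ ℂ)
        - Polynomial.C (Complex.I * l) * q.map (algebraMap ℝ ℂ)
      = ∏ j, (Polynomial.X - Polynomial.C (z j)))
    (hupper : ∀ j, 0 < (z j).im) :
    ((p.roots.filter (fun x => x < 0)).card = s ∧
     (p.roots.filter (fun x => 0 < x)).card = n - s)
      ↔ (Real.pi / 2 + Real.pi * ((s : ℝ) - 1) < ∑ j, argPV (z j) ∧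
         ∑ j, argPV (z j) < Real.pi / 2 + Real.pi * s) :=
  neg_pos_zero_count_iff_arg_sum_general n s p q l hp hpd z hfact hupper
end

section
/- Let p and r be monic real polynomials of degree n, and let α be a complex number with Im α > 0. Define the monic polynomial h(z) = α p(z) + (1 - α) r(z) = ∏_{j=1}^n (z - z_j). If the zeros λ_1, ..., λ_n of p and μ_1, ..., μ_n of r satisfy λ_1 < μ_1 < λ_2 < ... < λ_s < μ_s < 0 < μ_{s+1} < λ_{s+1} < ... < μ_n < λ_n for some 0 ≤ s ≤ n - 1, then all zeros z_1, ..., z_n of h are non-real and satisfy Σ_{j=1}^n Arg_{[0,π)} z_j < Arg α; moreover, the number of z_j in the open upper half-plane ℂ₊ equals n - s (the number of positive zeros of p), and the number of z_j in the open lower half-plane ℂ₋ equals s (the number of negative zeros of p). -/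
/-- `Arg_{[0,π)} z`: equals `Arg z` if `Im z > 0`, `0` if `z` is real, and
`π + Arg z` if `Im z < 0`. -/
noncomputable def arg0pi (z : ℂ) : ℝ :=
  if 0 < z.im then Complex.arg z
  else if z.im < 0 then Real.pi + Complex.arg z
  else 0

/-- The zeros `λ₁ < μ₁ < ⋯ < λ_s < μ_s < 0 < μ_{s+1} < λ_{s+1} < ⋯ < μ_n < λ_n`
pattern (0-indexed: the first `s` pairs are negative with `λ` before `μ`, the remaining
ones positive with `μ` before `λ`). For `s = 0` this reads
`0 < μ₁ < λ₁ < μ₂ < λ₂ < ⋯ < μ_n < λ_n`. -/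
def BrokenInterlace (n s : ℕ) (lam mu : Fin n → ℝ) : Prop :=
  (∀ i : Fin n, i.1 < s → lam i < mu i ∧ mu i < 0) ∧
  (∀ i : Fin n, s ≤ i.1 → 0 < mu i ∧ mu i < lam i) ∧
  (∀ i : Fin n, ∀ h : i.1 + 1 < n, i.1 + 1 < s → mu i < lam ⟨i.1 + 1, h⟩) ∧
  (∀ i : Fin n, ∀ h : i.1 + 1 < n, s ≤ i.1 → lam i < mu ⟨i.1 + 1, h⟩)

/-! Along the real line write `h x = ρ x * exp (G x * I)` with `G x = ∑ j, arg (x - z j)`, a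
continuous lift of `arg ∘ h` tending to `0` at `+∞`. Since `Im (h x) = Im α * (p x - r x)`,
`h x` is real only where `p x = r x`, and then it has the sign of `r x`. Hence on each gap between
consecutive roots of `r` the lift avoids the multiples of `π` of one parity and stays in a window
of length `2π`, while at a root `μ` of `r` the value `h μ = α * p μ` fixes `G μ` modulo `2π`.
Walking down from `+∞` through the positive roots of `r` gives
`G 0 = arg (α * |p 0| + (1 - α) * |r 0|) - (n - s) * π`, and `0 < |r 0| ≤ |p 0|` puts that
argument in `[0, arg α)`. The reflection `x ↦ -x` turns the configuration into one of the same
kind with `n - s` negative pairs, which bounds `∑ j, arg (z j) + s * π` in the same way. As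
`arg (-z) - arg z = ∓π` according to the half-plane of `z`, comparing the two bounds counts the
roots in each half-plane, and `∑ j, arg0pi (z j) = ∑ j, arg (z j) + π * #{j | (z j).im < 0}`.
-/

open Complex Real Filter Set
open scoped Topology

theorem IsPreconnected.mapsTo_Ioo {X : Type*} [TopologicalSpace X] {S : Set X}
    (hS : IsPreconnected S) {f : X → ℝ} (hf : ContinuousOn f S) {a b : ℝ}
    (ha : ∀ x ∈ S, f x ≠ a) (hb : ∀ x ∈ S, f x ≠ b) {y : X} (hy : y ∈ S)
    (hfy : f y ∈ Ioo a b) : MapsTo f S (Ioo a b) := by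
  intro x hx
  by_contra hfx
  rcases le_or_gt (f x) a with hxa | hax
  · obtain ⟨c, hc, hfc⟩ := hS.intermediate_value hx hy hf ⟨hxa, hfy.1.le⟩
    exact ha c hc hfc
  · have hbx : b ≤ f x := not_lt.mp fun hxb => hfx ⟨hax, hxb⟩
    obtain ⟨c, hc, hfc⟩ := hS.intermediate_value hy hx hf ⟨hfy.2.le, hbx⟩
    exact hb c hc hfc

theorem Int.eq_zero_of_abs_mul_lt {m : ℤ} {c : ℝ} (h : |m * c| < c) : m = 0 := by
  have hc : 0 < c := (abs_nonneg _).trans_lt h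
  rw [abs_mul, abs_of_pos hc, mul_lt_iff_lt_one_left hc] at h
  exact Int.abs_lt_one_iff.mp (by exact_mod_cast h)

theorem eq_of_mem_Ioo_of_eq_add_two_pi_mul {θ θ' a : ℝ} (hθ : θ ∈ Ioo a (a + 2 * π))
    (hθ' : θ' ∈ Ioo a (a + 2 * π)) {m : ℤ} (h : θ = θ' + 2 * π * m) : θ = θ' := by
  have hm : m = 0 := Int.eq_zero_of_abs_mul_lt (c := 2 * π) <| by
    rw [abs_lt]; constructor <;> linarith [hθ.1, hθ.2, hθ'.1, hθ'.2]
  simpa [hm] using h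

theorem Fin.card_filter_le_val (n k : ℕ) :
    (Finset.univ.filter fun i : Fin n => k ≤ i.1).card = n - k := by
  have h := Finset.card_filter_add_card_filter_not (s := Finset.univ) fun i : Fin n => i.1 < k
  simp only [Fin.card_filter_val_lt, Finset.card_univ, Fintype.card_fin, not_lt] at h
  omega

theorem Fin.strictMono_of_lt_add_one {n : ℕ} {β : Type*} [Preorder β] {f : Fin n → β}
    (h : ∀ i : Fin n, ∀ hi : i.1 + 1 < n, f i < f ⟨i.1 + 1, hi⟩) : StrictMono f := by
  cases n with
  | zero => exact fun i => i.elim0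
  | succ m => exact Fin.strictMono_iff_lt_succ.2 fun i => h i.castSucc (by simp)

theorem neg_one_pow_card_mul_prod_sub_nonneg {ι : Type*} [Fintype ι] (a : ι → ℝ) {x : ℝ}
    (S : Finset ι) (hS : ∀ i ∈ S, x ≤ a i) (hSc : ∀ i ∉ S, a i ≤ x) :
    0 ≤ (-1) ^ S.card * ∏ i, (x - a i) := by
  classical
  rw [← S.prod_mul_prod_compl, ← mul_assoc, ← Finset.prod_neg]
  exact mul_nonneg (Finset.prod_nonneg fun i hi => by linarith [hS i hi])
    (Finset.prod_nonneg fun i hi => by linarith [hSc i (Finset.mem_compl.1 hi)])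

theorem neg_one_pow_card_mul_prod_sub_pos {ι : Type*} [Fintype ι] (a : ι → ℝ) {x : ℝ}
    (S : Finset ι) (hS : ∀ i ∈ S, x < a i) (hSc : ∀ i ∉ S, a i < x) :
    0 < (-1) ^ S.card * ∏ i, (x - a i) := by
  classical
  rw [← S.prod_mul_prod_compl, ← mul_assoc, ← Finset.prod_neg]
  exact mul_pos (Finset.prod_pos fun i hi => by linarith [hS i hi])
    (Finset.prod_pos fun i hi => by linarith [hSc i (Finset.mem_compl.1 hi)])

theorem prod_zero_sub_eq_neg_one_pow_mul_prod_abs {n s : ℕ} (a : Fin n → ℝ)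
    (hneg : ∀ i : Fin n, i.1 < s → a i < 0) (hpos : ∀ i : Fin n, s ≤ i.1 → 0 < a i) :
    ∏ i, (0 - a i) = (-1) ^ (n - s) * ∏ i, |a i| := by
  have hsign : 0 < (-1) ^ (n - s) * ∏ i, (0 - a i) := by
    rw [← Fin.card_filter_le_val]
    exact neg_one_pow_card_mul_prod_sub_pos a _ (fun i hi => hpos i (Finset.mem_filter.1 hi).2)
      fun i hi => hneg i (by simpa using hi)
  have habs : (-1) ^ (n - s) * ∏ i, (0 - a i) = ∏ i, |a i| := by
    rw [← abs_of_pos hsign]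
    simp [abs_mul, Finset.abs_prod]
  rw [← habs, ← mul_assoc, ← mul_pow]
  norm_num

theorem prod_sub_neg {ι R : Type*} [Fintype ι] [CommRing R] (x : R) (a : ι → R) :
    ∏ i, (x - -a i) = (-1) ^ Fintype.card ι * ∏ i, (-x - a i) := by
  rw [← Finset.card_univ, ← Finset.prod_neg]
  exact Finset.prod_congr rfl fun i _ => by ring

theorem prod_eq_prod_norm_mul_exp_sum_arg {ι : Type*} [Fintype ι] (w : ι → ℂ) :
    ∏ j, w j = ((∏ j, ‖w j‖ : ℝ) : ℂ) * cexp ((∑ j, arg (w j) : ℝ) * I) := by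
  calc ∏ j, w j = ∏ j, ((‖w j‖ : ℂ) * cexp (arg (w j) * I)) := by
        simp only [norm_mul_exp_arg_mul_I]
    _ = _ := by
        rw [Finset.prod_mul_distrib, ← Complex.exp_sum, ← Finset.sum_mul]
        push_cast
        rfl

theorem continuous_arg_ofReal_sub {z : ℂ} (hz : z.im ≠ 0) :
    Continuous fun x : ℝ => arg (x - z) :=
  continuous_iff_continuousAt.2 fun _ =>
    (continuousAt_arg (Or.inr (by simpa using hz))).comp (by fun_prop)

theorem tendsto_arg_ofReal_sub_atTop (z : ℂ) :
    Tendsto (fun x : ℝ => arg (x - z)) atTop (𝓝 0) := by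
  have h1 : Tendsto (fun x : ℝ => 1 - z * ((x⁻¹ : ℝ) : ℂ)) atTop (𝓝 1) := by
    simpa using tendsto_const_nhds.sub
      (tendsto_const_nhds.mul ((continuous_ofReal.tendsto 0).comp tendsto_inv_atTop_zero))
  have h2 := (continuousAt_arg one_mem_slitPlane).tendsto.comp h1
  rw [arg_one] at h2
  refine h2.congr' ?_
  filter_upwards [eventually_gt_atTop 0] with x hx
  rw [Function.comp_apply, ← arg_real_mul _ hx]
  congr 1
  push_cast
  field_simp [ofReal_ne_zero.2 hx.ne']

theorem arg_mem_Ioo_of_im_pos {z : ℂ} (hz : 0 < z.im) : arg z ∈ Ioo 0 π :=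
  ⟨(arg_nonneg_iff.2 hz.le).lt_of_ne fun h => hz.ne' (arg_eq_zero_iff.1 h.symm).2,
    arg_lt_pi_iff.2 (Or.inr hz.ne')⟩

theorem arg_neg_eq_arg_add_ite {z : ℂ} (hz : z.im ≠ 0) :
    arg (-z) = arg z + (if z.im < 0 then π else 0) - (if 0 < z.im then π else 0) := by
  rcases hz.lt_or_gt with h | h
  · simp [arg_neg_eq_arg_add_pi_of_im_neg h, h, h.not_gt]
  · simp [arg_neg_eq_arg_sub_pi_of_im_pos h, h, h.not_gt]

theorem arg0pi_eq_arg_add_ite {z : ℂ} (hz : z.im ≠ 0) :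
    arg0pi z = arg z + if z.im < 0 then π else 0 := by
  rcases hz.lt_or_gt with h | h
  · simp [arg0pi, h, h.not_gt, add_comm]
  · simp [arg0pi, h, h.not_gt]

section HalfPlanes

variable {ι : Type*} [Fintype ι] {z : ι → ℂ}

theorem card_im_pos_add_card_im_neg (hz : ∀ j, (z j).im ≠ 0) :
    (Finset.univ.filter fun j => 0 < (z j).im).card
      + (Finset.univ.filter fun j => (z j).im < 0).card = Fintype.card ι := by
  rw [← Finset.card_univ,
    ← Finset.card_filter_add_card_filter_not (s := Finset.univ) fun j => 0 < (z j).im]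
  congr 2
  exact Finset.filter_congr fun j _ => ⟨fun h => h.not_gt, fun h => (not_lt.1 h).lt_of_ne (hz j)⟩

theorem sum_ite_pi (p : ι → Prop) [DecidablePred p] :
    ∑ j, (if p j then π else 0) = (Finset.univ.filter p).card * π := by
  rw [Finset.sum_ite, Finset.sum_const, Finset.sum_const_zero, add_zero, nsmul_eq_mul]

theorem sum_arg_neg_eq (hz : ∀ j, (z j).im ≠ 0) :
    ∑ j, arg (-z j) = ∑ j, arg (z j) + (Finset.univ.filter fun j => (z j).im < 0).card * π
      - (Finset.univ.filter fun j => 0 < (z j).im).card * π := by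
  rw [Finset.sum_congr rfl fun j _ => arg_neg_eq_arg_add_ite (hz j), Finset.sum_sub_distrib,
    Finset.sum_add_distrib, sum_ite_pi, sum_ite_pi]

theorem sum_arg0pi_eq (hz : ∀ j, (z j).im ≠ 0) :
    ∑ j, arg0pi (z j)
      = ∑ j, arg (z j) + (Finset.univ.filter fun j => (z j).im < 0).card * π := by
  rw [Finset.sum_congr rfl fun j _ => arg0pi_eq_arg_add_ite (hz j), Finset.sum_add_distrib,
    sum_ite_pi]

end HalfPlanes

section Polar

variable {α : ℂ}

theorem eq_and_eq_of_mul_add_one_sub_mul_eq_ofReal (hα : α.im ≠ 0) {a b c : ℝ}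
    (h : α * a + (1 - α) * b = c) : a = b ∧ b = c := by
  have him := congrArg im h
  have hre := congrArg re h
  simp only [add_im, mul_im, ofReal_re, ofReal_im, sub_im, one_im, sub_re, one_re, add_re,
    mul_re, mul_zero, zero_sub, sub_zero] at him hre
  have hab : a = b := by
    have : α.im * (a - b) = 0 := by linarith
    linarith [sub_eq_zero.1 ((mul_eq_zero.1 this).resolve_left hα)]
  subst hab
  exact ⟨rfl, by linarith⟩

theorem even_add_of_mul_exp_eq_int_mul_pi (hα : α.im ≠ 0) {a b ρ : ℝ} (hρ : 0 < ρ)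
    {M : ℤ} (h : α * a + (1 - α) * b = ρ * cexp ((M * π : ℝ) * I)) {c : ℕ}
    (hb : 0 ≤ (-1) ^ c * b) : Even (M + c) := by
  have hexp : cexp ((M * π : ℝ) * I) = ((-1 : ℝ) ^ M : ℝ) := by
    rw [show ((M * π : ℝ) : ℂ) * I = M * (π * I) by push_cast; ring, exp_int_mul, exp_pi_mul_I]
    push_cast
    rfl
  rw [hexp, ← ofReal_mul] at h
  obtain ⟨-, rfl⟩ := eq_and_eq_of_mul_add_one_sub_mul_eq_ofReal hα h
  refine (Int.even_or_odd (M + c)).resolve_right fun hodd => ?_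
  have : (-1 : ℝ) ^ c * (ρ * (-1) ^ M) = -ρ := by
    rw [mul_left_comm, ← zpow_natCast, ← zpow_add₀ (by norm_num), add_comm, hodd.neg_one_zpow]
    ring
  linarith

theorem exists_eq_add_two_pi_mul_of_mul_exp_eq {ρ ρ' θ θ' : ℝ} (hρ : 0 < ρ) (hρ' : 0 < ρ')
    (h : (ρ : ℂ) * cexp (θ * I) = ρ' * cexp (θ' * I)) : ∃ m : ℤ, θ = θ' + 2 * π * m := by
  have hρρ' : ρ = ρ' := by
    simpa [abs_of_pos hρ, abs_of_pos hρ'] using congrArg norm h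
  subst hρρ'
  obtain ⟨m, hm⟩ := exp_eq_exp_iff_exists_int.1 (mul_left_cancel₀ (by exact_mod_cast hρ.ne') h)
  refine ⟨m, ofReal_injective (mul_right_cancel₀ I_ne_zero ?_)⟩
  rw [hm]
  push_cast
  ring

theorem exists_eq_arg_add_of_real_mul_eq {ρ θ c : ℝ} {w : ℂ} (hρ : 0 < ρ) {L : ℕ}
    (hc : 0 < (-1) ^ L * c) (h : (c : ℂ) * w = ρ * cexp (θ * I)) :
    ∃ m : ℤ, θ = arg w + L * π + 2 * π * m := by
  have hw : w ≠ 0 :=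
    right_ne_zero_of_mul (h ▸ mul_ne_zero (ofReal_ne_zero.2 hρ.ne') (Complex.exp_ne_zero _))
  have hcw : (c : ℂ) * w
      = (((-1) ^ L * c * ‖w‖ : ℝ) : ℂ) * cexp ((arg w + L * π : ℝ) * I) := by
    conv_lhs => rw [← norm_mul_exp_arg_mul_I w]
    rw [show ((arg w + L * π : ℝ) : ℂ) * I = arg w * I + L * (π * I) by push_cast; ring,
      Complex.exp_add, Complex.exp_nat_mul, exp_pi_mul_I]
    push_cast
    have hsq : ((-1 : ℂ) ^ L) ^ 2 = 1 := by rw [← pow_mul, mul_comm, pow_mul]; norm_num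
    linear_combination -(c : ℂ) * ‖w‖ * cexp (arg w * I) * hsq
  obtain ⟨m, hm⟩ := exists_eq_add_two_pi_mul_of_mul_exp_eq hρ
    (mul_pos hc (norm_pos_iff.2 hw)) (h.symm.trans hcw)
  exact ⟨m, by linarith⟩

theorem arg_mul_add_one_sub_mul_mem_Ico (hα : 0 < α.im) {A B : ℝ} (hB : 0 < B)
    (hBA : B ≤ A) : arg (α * A + (1 - α) * B) ∈ Ico 0 (arg α) := by
  have hα0 : α ≠ 0 := fun h => by simp [h] at hα
  -- the point is `α * q` with `Im q < 0`, so its argument is below `arg α`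
  set q : ℂ := (A - B : ℝ) + B * α⁻¹ with hq
  have hqim : q.im < 0 := by
    have : 0 < B * (α.im / normSq α) := by have := normSq_pos.2 hα0; positivity
    simp only [hq, add_im, ofReal_im, mul_im, ofReal_re, inv_im, zero_mul, zero_add, neg_div,
      mul_neg]
    linarith
  have hq0 : q ≠ 0 := fun h => by simp [h] at hqim
  have hw : α * A + (1 - α) * B = α * q := by
    rw [hq]; field_simp; push_cast; ring
  have hαarg := arg_mem_Ioo_of_im_pos hα
  have hqarg : -π < arg q ∧ arg q < 0 := ⟨neg_pi_lt_arg q, arg_neg_iff.2 hqim⟩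
  refine ⟨arg_nonneg_iff.2 ?_, ?_⟩
  · simp only [add_im, mul_im, ofReal_re, ofReal_im, sub_im, one_im, sub_re, one_re,
      mul_zero, zero_sub]
    nlinarith
  · rw [hw, arg_mul hα0 hq0 ⟨by linarith [hαarg.1], by linarith [hαarg.2]⟩]
    linarith

end Polar

/-- The polynomial `h = α p + (1 - α) r` of the statement on the real line, where `p`, `r` are the
monic polynomials with roots `lam`, `mu`. -/
def pencil {n : ℕ} (α : ℂ) (lam mu : Fin n → ℝ) (x : ℝ) : ℂ :=
  α * ↑(∏ i, (x - lam i)) + (1 - α) * ↑(∏ i, (x - mu i))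

theorem pencil_reflect {n : ℕ} {α : ℂ} {lam mu : Fin n → ℝ} {z : Fin n → ℂ}
    (hh : ∀ x : ℝ, pencil α lam mu x = ∏ j, (x - z j)) (x : ℝ) :
    pencil α (fun i => -lam i.rev) (fun i => -mu i.rev) x = ∏ j, (x - -z j) := by
  have hrev : ∀ a : Fin n → ℝ, ∏ i : Fin n, (x - -a i.rev) = (-1) ^ n * ∏ i, (-x - a i) :=
    fun a => (Equiv.prod_comp Fin.revPerm fun i => x - -a i).trans
      (by rw [prod_sub_neg, Fintype.card_fin])
  rw [pencil, hrev lam, hrev mu, prod_sub_neg, Fintype.card_fin, ← ofReal_neg, ← hh (-x), pencil]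
  push_cast
  ring

/-- For increasing `mu`, the closed gap `[mu (k - 1), mu k]` between consecutive roots, unbounded
on the side where that root does not exist. -/
def rootGap {n : ℕ} (mu : Fin n → ℝ) (k : ℕ) : Set ℝ :=
  {x | ∀ i : Fin n, (i.1 < k → mu i ≤ x) ∧ (k ≤ i.1 → x ≤ mu i)}

section RootGap

variable {n : ℕ} {lam mu : Fin n → ℝ}

theorem ordConnected_rootGap (mu : Fin n → ℝ) (k : ℕ) : (rootGap mu k).OrdConnected :=
  ⟨fun _ hx _ hy _ ht i => ⟨fun h => ((hx i).1 h).trans ht.1, fun h => ht.2.trans ((hy i).2 h)⟩⟩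

theorem StrictMono.apply_mem_rootGap (hmu : StrictMono mu) (j : Fin n) {k : ℕ} (hjk : j.1 ≤ k)
    (hkj : k ≤ j.1 + 1) : mu j ∈ rootGap mu k :=
  fun i => ⟨fun hi => hmu.monotone (Fin.le_def.2 (by omega)),
    fun hi => hmu.monotone (Fin.le_def.2 (by omega))⟩

theorem neg_one_pow_mul_prod_sub_nonneg_of_mem_rootGap {k : ℕ} {x : ℝ}
    (hx : x ∈ rootGap mu k) : 0 ≤ (-1) ^ (n - k) * ∏ i, (x - mu i) := by
  rw [← Fin.card_filter_le_val]
  exact neg_one_pow_card_mul_prod_sub_nonneg mu _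
    (fun i hi => (hx i).2 (Finset.mem_filter.1 hi).2) fun i hi => (hx i).1 (by simpa using hi)

theorem mapsTo_rootGap_of_mem {α : ℂ} (hα : α.im ≠ 0) {G ρ : ℝ → ℝ} (hG : Continuous G)
    (hρ : ∀ x, 0 < ρ x) (hpolar : ∀ x, pencil α lam mu x = ρ x * cexp (G x * I))
    {k : ℕ} (hk : k ≤ n) {y : ℝ} (hy : y ∈ rootGap mu k)
    (hGy : G y ∈ Ioo ((k - n - 1 : ℝ) * π) ((k - n + 1 : ℝ) * π)) :
    MapsTo G (rootGap mu k) (Ioo ((k - n - 1 : ℝ) * π) ((k - n + 1 : ℝ) * π)) := by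
  have hwall : ∀ M : ℤ, (M + k - n) % 2 = 1 → ∀ x ∈ rootGap mu k, G x ≠ M * π := by
    intro M hM x hx hGx
    have := even_add_of_mul_exp_eq_int_mul_pi hα (hρ x) (hGx ▸ hpolar x)
      (neg_one_pow_mul_prod_sub_nonneg_of_mem_rootGap hx)
    rw [Nat.cast_sub hk, Int.even_iff] at this
    omega
  refine (ordConnected_rootGap mu k).isPreconnected.mapsTo_Ioo hG.continuousOn
    (fun x hx => ?_) (fun x hx => ?_) hy hGy
  · exact_mod_cast hwall (k - n - 1) (by omega) x hx
  · exact_mod_cast hwall (k - n + 1) (by omega) x hx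

end RootGap

namespace BrokenInterlace

variable {n s : ℕ} {lam mu : Fin n → ℝ}

theorem lam_lt_mu_self (h : BrokenInterlace n s lam mu) {i : Fin n} (hi : i.1 < s) :
    lam i < mu i :=
  (h.1 i hi).1

theorem mu_neg (h : BrokenInterlace n s lam mu) {i : Fin n} (hi : i.1 < s) : mu i < 0 :=
  (h.1 i hi).2

theorem mu_pos (h : BrokenInterlace n s lam mu) {i : Fin n} (hi : s ≤ i.1) : 0 < mu i :=
  (h.2.1 i hi).1

theorem mu_lt_lam_self (h : BrokenInterlace n s lam mu) {i : Fin n} (hi : s ≤ i.1) :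
    mu i < lam i :=
  (h.2.1 i hi).2

theorem lam_strictMono (h : BrokenInterlace n s lam mu) : StrictMono lam := by
  refine Fin.strictMono_of_lt_add_one fun i hi => ?_
  have hnext := h.mu_lt_lam_self (i := ⟨i.1 + 1, hi⟩)
  rcases lt_or_ge (i.1 + 1) s with h1 | h1
  · linarith [h.lam_lt_mu_self (i := i) (by omega), h.2.2.1 i hi h1]
  rcases lt_or_ge i.1 s with h2 | h2
  · linarith [h.lam_lt_mu_self h2, h.mu_neg h2, h.mu_pos (i := ⟨i.1 + 1, hi⟩) h1, hnext h1]
  · linarith [h.2.2.2 i hi h2, hnext h1]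

theorem mu_strictMono (h : BrokenInterlace n s lam mu) : StrictMono mu := by
  refine Fin.strictMono_of_lt_add_one fun i hi => ?_
  rcases lt_or_ge (i.1 + 1) s with h1 | h1
  · linarith [h.2.2.1 i hi h1, h.lam_lt_mu_self (i := ⟨i.1 + 1, hi⟩) h1]
  rcases lt_or_ge i.1 s with h2 | h2
  · linarith [h.mu_neg h2, h.mu_pos (i := ⟨i.1 + 1, hi⟩) h1]
  · linarith [h.mu_lt_lam_self h2, h.2.2.2 i hi h2]

theorem lam_lt_mu_of_lt (h : BrokenInterlace n s lam mu) {i j : Fin n} (hij : i < j) :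
    lam i < mu j := by
  rcases lt_or_ge i.1 s with hi | hi
  · exact (h.lam_lt_mu_self hi).trans (h.mu_strictMono hij)
  · have hi1 : i.1 + 1 < n := by omega
    exact (h.2.2.2 i hi1 hi).trans_le (h.mu_strictMono.monotone (Fin.mk_le_of_le_val hij))

theorem mu_lt_lam_of_lt (h : BrokenInterlace n s lam mu) {i j : Fin n} (hij : j < i) :
    mu j < lam i := by
  rcases lt_or_ge j.1 s with hj | hj
  · rcases lt_or_ge i.1 s with hi | hi
    · have hj1 : j.1 + 1 < n := by omega
      exact (h.2.2.1 j hj1 (by omega)).trans_le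
        (h.lam_strictMono.monotone (Fin.mk_le_of_le_val hij))
    · exact (h.mu_neg hj).trans ((h.mu_pos hi).trans (h.mu_lt_lam_self hi))
  · exact (h.mu_lt_lam_self hj).trans (h.lam_strictMono hij)

theorem lam_ne_mu (h : BrokenInterlace n s lam mu) (i j : Fin n) : lam i ≠ mu j := by
  rcases lt_trichotomy i j with hij | rfl | hij
  · exact (h.lam_lt_mu_of_lt hij).ne
  · rcases lt_or_ge i.1 s with hi | hi
    · exact (h.lam_lt_mu_self hi).ne
    · exact (h.mu_lt_lam_self hi).ne'
  · exact (h.mu_lt_lam_of_lt hij).ne'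

theorem reflect (h : BrokenInterlace n s lam mu) :
    BrokenInterlace n (n - s) (fun i => -lam i.rev) (fun i => -mu i.rev) := by
  refine ⟨fun i hi => ?_, fun i hi => ?_, fun i hi _ => ?_, fun i hi _ => ?_⟩
  · have hs : s ≤ i.rev.1 := by rw [Fin.val_rev]; omega
    exact ⟨neg_lt_neg (h.mu_lt_lam_self hs), neg_neg_of_pos (h.mu_pos hs)⟩
  · have hs : i.rev.1 < s := by rw [Fin.val_rev]; omega
    exact ⟨neg_pos_of_neg (h.mu_neg hs), neg_lt_neg (h.lam_lt_mu_self hs)⟩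
  · exact neg_lt_neg (h.lam_lt_mu_of_lt (Fin.lt_def.2 (by simp only [Fin.val_rev]; omega)))
  · exact neg_lt_neg (h.mu_lt_lam_of_lt (Fin.lt_def.2 (by simp only [Fin.val_rev]; omega)))

theorem neg_one_pow_mul_prod_mu_sub_lam_pos (h : BrokenInterlace n s lam mu) {j : Fin n}
    (hj : s ≤ j.1) : 0 < (-1) ^ (n - j.1) * ∏ i, (mu j - lam i) := by
  rw [← Fin.card_filter_le_val]
  refine neg_one_pow_card_mul_prod_sub_pos lam _ (fun i hi => ?_) fun i hi => ?_
  · rcases (Fin.le_def.2 (Finset.mem_filter.1 hi).2).eq_or_lt with rfl | hji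
    · exact h.mu_lt_lam_self hj
    · exact h.mu_lt_lam_of_lt hji
  · exact h.lam_lt_mu_of_lt (Fin.lt_def.2 (by simpa using hi))

theorem prod_abs_mu_pos (h : BrokenInterlace n s lam mu) : 0 < ∏ i, |mu i| :=
  Finset.prod_pos fun i _ => abs_pos.2 <| by
    rcases lt_or_ge i.1 s with hi | hi
    · exact (h.mu_neg hi).ne
    · exact (h.mu_pos hi).ne'

theorem prod_abs_mu_le_prod_abs_lam (h : BrokenInterlace n s lam mu) :
    ∏ i, |mu i| ≤ ∏ i, |lam i| :=
  Finset.prod_le_prod (fun i _ => abs_nonneg _) fun i _ => by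
    rcases lt_or_ge i.1 s with hi | hi
    · rw [abs_of_neg (h.mu_neg hi), abs_of_neg ((h.lam_lt_mu_self hi).trans (h.mu_neg hi))]
      linarith [h.lam_lt_mu_self hi]
    · rw [abs_of_pos (h.mu_pos hi), abs_of_pos ((h.mu_pos hi).trans (h.mu_lt_lam_self hi))]
      exact (h.mu_lt_lam_self hi).le

theorem im_ne_zero (h : BrokenInterlace n s lam mu) {α : ℂ} (hα : α.im ≠ 0) {ι : Type*}
    [Fintype ι] {z : ι → ℂ} (hh : ∀ x : ℝ, pencil α lam mu x = ∏ j, (x - z j)) (j : ι) :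
    (z j).im ≠ 0 := by
  intro hj
  have hzj : z j = (z j).re := Complex.ext (by simp) (by simp [hj])
  have h0 := (hh (z j).re).trans
    (Finset.prod_eq_zero (Finset.mem_univ j) (by rw [← hzj, sub_self]))
  obtain ⟨hpr, hr⟩ := eq_and_eq_of_mul_add_one_sub_mul_eq_ofReal hα (h0.trans ofReal_zero.symm)
  obtain ⟨i, -, hi⟩ := Finset.prod_eq_zero_iff.1 (hpr.trans hr)
  obtain ⟨i', -, hi'⟩ := Finset.prod_eq_zero_iff.1 hr
  exact h.lam_ne_mu i i' (by linarith [sub_eq_zero.1 hi, sub_eq_zero.1 hi'])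

section Lift

variable {α : ℂ} {G ρ : ℝ → ℝ}

theorem mapsTo_rootGap (h : BrokenInterlace n s lam mu) (hα : 0 < α.im) (hG : Continuous G)
    (hGtop : Tendsto G atTop (𝓝 0)) (hρ : ∀ x, 0 < ρ x)
    (hpolar : ∀ x, pencil α lam mu x = ρ x * cexp (G x * I)) {k : ℕ} (hsk : s ≤ k)
    (hkn : k ≤ n) :
    MapsTo G (rootGap mu k) (Ioo ((k - n - 1 : ℝ) * π) ((k - n + 1 : ℝ) * π)) := by
  have hβ := arg_mem_Ioo_of_im_pos hα
  refine Nat.decreasingInduction (motive := fun k _ => s ≤ k →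
      MapsTo G (rootGap mu k) (Ioo ((k - n - 1 : ℝ) * π) ((k - n + 1 : ℝ) * π)))
    (fun k hk ih hsk => ?_) (fun _ => ?_) hkn hsk
  · set j : Fin n := ⟨k, hk⟩
    have hnext := ih (by omega) (h.mu_strictMono.apply_mem_rootGap j (by simp [j]) le_rfl)
    push_cast at hnext
    -- `h (mu j) = α * p (mu j)` fixes `G (mu j)` modulo `2π`; the window of the next gap up
    -- selects the representative.
    have hroot : ∏ i, (mu j - mu i) = 0 := Finset.prod_eq_zero (Finset.mem_univ j) (sub_self _)
    obtain ⟨m, hm⟩ := exists_eq_arg_add_of_real_mul_eq (hρ _)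
      (h.neg_one_pow_mul_prod_mu_sub_lam_pos hsk)
      (by simpa [pencil, hroot, mul_comm] using hpolar (mu j))
    have hval : G (mu j) = arg α + (k - n) * π := by
      refine eq_of_mem_Ioo_of_eq_add_two_pi_mul (a := (k - n) * π) (m := m + (n - k))
        ⟨by linarith [hnext.1], by linarith [hnext.2]⟩
        ⟨by linarith [hβ.1], by linarith [hβ.2, pi_pos]⟩ ?_
      rw [hm, Nat.cast_sub hk.le]
      push_cast
      ring
    refine mapsTo_rootGap_of_mem hα.ne' hG hρ hpolar hk.le
      (h.mu_strictMono.apply_mem_rootGap j le_rfl (by simp [j])) ?_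
    rw [hval]
    constructor <;> linarith [hβ.1, hβ.2]
  · have hev : ∀ᶠ x in atTop, G x ∈ Ioo (-π) π ∧ ∀ i, mu i ≤ x :=
      (hGtop.eventually (Ioo_mem_nhds (neg_neg_of_pos pi_pos) pi_pos)).and
        (eventually_all.2 fun i => eventually_ge_atTop (mu i))
    obtain ⟨y, hGy, hy⟩ := hev.exists
    exact mapsTo_rootGap_of_mem hα.ne' hG hρ hpolar le_rfl
      (fun i => ⟨fun _ => hy i, fun hi => absurd i.2 (by omega)⟩) (by simpa using hGy)

theorem lift_zero_add_mem_Ico (h : BrokenInterlace n s lam mu) (hsn : s ≤ n) (hα : 0 < α.im)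
    (hG : Continuous G) (hGtop : Tendsto G atTop (𝓝 0)) (hρ : ∀ x, 0 < ρ x)
    (hpolar : ∀ x, pencil α lam mu x = ρ x * cexp (G x * I)) :
    G 0 + (n - s) * π ∈ Ico 0 (arg α) := by
  have hwin := h.mapsTo_rootGap hα hG hGtop hρ hpolar le_rfl hsn
    (x := 0) fun i => ⟨fun hi => (h.mu_neg hi).le, fun hi => (h.mu_pos hi).le⟩
  have hp := prod_zero_sub_eq_neg_one_pow_mul_prod_abs lam
    (fun i hi => (h.lam_lt_mu_self hi).trans (h.mu_neg hi))
    fun i hi => (h.mu_pos hi).trans (h.mu_lt_lam_self hi)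
  have hr := prod_zero_sub_eq_neg_one_pow_mul_prod_abs mu (fun i hi => h.mu_neg hi)
    fun i hi => h.mu_pos hi
  obtain ⟨m, hm⟩ := exists_eq_arg_add_of_real_mul_eq (hρ 0) (c := (-1) ^ (n - s))
    (w := α * ↑(∏ i, |lam i|) + (1 - α) * ↑(∏ i, |mu i|)) (L := n - s)
    (by rw [← mul_pow]; norm_num)
    (by rw [← hpolar 0, pencil, hp, hr]; push_cast; ring)
  have hδ := arg_mul_add_one_sub_mul_mem_Ico hα h.prod_abs_mu_pos h.prod_abs_mu_le_prod_abs_lam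
  have hval : G 0 = arg (α * ↑(∏ i, |lam i|) + (1 - α) * ↑(∏ i, |mu i|)) - (n - s) * π := by
    refine eq_of_mem_Ioo_of_eq_add_two_pi_mul (a := (s - n - 1) * π) (m := m + (n - s))
      ⟨by linarith [hwin.1], by linarith [hwin.2]⟩
      ⟨by linarith [hδ.1, pi_pos], by linarith [hδ.2, (arg_mem_Ioo_of_im_pos hα).2]⟩ ?_
    rw [hm, Nat.cast_sub hsn]
    push_cast
    ring
  rw [hval, sub_add_cancel]
  exact hδ

theorem sum_arg_neg_add_mem_Ico (h : BrokenInterlace n s lam mu) (hsn : s ≤ n) (hα : 0 < α.im)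
    {ι : Type*} [Fintype ι] {z : ι → ℂ} (hz : ∀ j, (z j).im ≠ 0)
    (hh : ∀ x : ℝ, pencil α lam mu x = ∏ j, (x - z j)) :
    ∑ j, arg (-z j) + (n - s) * π ∈ Ico 0 (arg α) := by
  have hρ : ∀ x : ℝ, 0 < ∏ j, ‖(x : ℂ) - z j‖ := fun x =>
    Finset.prod_pos fun j _ => norm_pos_iff.2 <| sub_ne_zero.2 fun hx => hz j (by simp [← hx])
  simpa using h.lift_zero_add_mem_Ico hsn hα (G := fun x => ∑ j, arg (x - z j))
    (continuous_finsetSum _ fun j _ => continuous_arg_ofReal_sub (hz j))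
    (by simpa using tendsto_finsetSum _ fun j _ => tendsto_arg_ofReal_sub_atTop (z j)) hρ
    fun x => (hh x).trans (prod_eq_prod_norm_mul_exp_sum_arg _)

end Lift

end BrokenInterlace

/-- Generalized Hermite–Biehler theorem (direct part, broken interlacing around
`t = 0`): if `p = ∏ᵢ (z - λᵢ)` and `r = ∏ᵢ (z - μᵢ)` are monic real of degree `n` with
`λ₁ < μ₁ < ⋯ < λ_s < μ_s < 0 < μ_{s+1} < λ_{s+1} < ⋯ < μ_n < λ_n` for some
`0 ≤ s ≤ n - 1`, `Im α > 0`, and `h = α p + (1 - α) r = ∏ⱼ (z - zⱼ)`, then all `zⱼ`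
are non-real, `∑ⱼ Arg_{[0,π)} zⱼ < Arg α`, the number of `zⱼ` in the open upper
half-plane equals `n - s` and the number in the open lower half-plane equals `s`. -/
theorem genHB_around_zero_direct (n s : ℕ) (hs : s ≤ n - 1)
    (lam mu : Fin n → ℝ) (hbi : BrokenInterlace n s lam mu)
    (α : ℂ) (hα : 0 < α.im) (z : Fin n → ℂ)
    (hfact : Polynomial.C α
          * ((∏ i, (Polynomial.X - Polynomial.C (lam i)) : Polynomial ℝ).map
              (algebraMap ℝ ℂ))
        + Polynomial.C (1 - α)
          * ((∏ i, (Polynomial.X - Polynomial.C (mu i)) : Polynomial ℝ).map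
              (algebraMap ℝ ℂ))
      = ∏ j, (Polynomial.X - Polynomial.C (z j))) :
    (∀ j, (z j).im ≠ 0) ∧
    (∑ j, arg0pi (z j)) < argPV α ∧
    (Finset.univ.filter fun j => 0 < (z j).im).card = n - s ∧
    (Finset.univ.filter fun j => (z j).im < 0).card = s := by
  have hsn : s ≤ n := by omega
  have hh (x : ℝ) : pencil α lam mu x = ∏ j, (x - z j) := by
    simpa [pencil, Polynomial.eval_prod] using congrArg (Polynomial.eval (x : ℂ)) hfact
  have hz := hbi.im_ne_zero hα.ne' hh
  have hX := hbi.sum_arg_neg_add_mem_Ico hsn hα hz hh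
  have hY := hbi.reflect.sum_arg_neg_add_mem_Ico (Nat.sub_le n s) hα
    (fun j => by simpa using hz j) (pencil_reflect hh)
  simp only [neg_neg, Nat.cast_sub hsn, sub_sub_cancel] at hY
  have hul := card_im_pos_add_card_im_neg hz
  rw [Fintype.card_fin] at hul
  have hneg := sum_arg_neg_eq hz
  have hβ := arg_mem_Ioo_of_im_pos hα
  have hlower : (Finset.univ.filter fun j => (z j).im < 0).card = s := by
    have hK : ((Finset.univ.filter fun j => (z j).im < 0).card : ℤ)
        - (Finset.univ.filter fun j => 0 < (z j).im).card + n - 2 * s = 0 :=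
      Int.eq_zero_of_abs_mul_lt (c := π) <| by
        rw [abs_lt]
        push_cast
        constructor <;> linarith [hX.1, hX.2, hY.1, hY.2, hβ.2]
    omega
  refine ⟨hz, ?_, by omega, hlower⟩
  rw [sum_arg0pi_eq hz, hlower, argPV, if_neg hβ.2.ne]
  exact hY.2
end
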